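/- arXiv:2601.12597 — 7 statements merged into one kernel-verified Lean document; each statement's English description precedes it below -/
import Mathlib

section
/- The cyclic weighted inversion number cwinv(π) := n·inv(π) − 2·winv(π) is invariant under right multiplication by the n-cycle c_n = (1,2,…,n): for every π ∈ S_n, cwinv(π·c_n) = cwinv(π). -/
/-! Write `cwinv σ` as a sum over position pairs `i < j` of a weight `w (σ i) (σ j)`, where
`w a b = [b < a] (n - 2 (a - b))`. Rotating the positions only moves position `0` to the end, so
`cwinv (π c) - cwinv π = ∑ v, w v a - ∑ v, w a v` with `a = π 0`. For `v ≠ a` the difference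
`w v a - w a v` equals `n - 2 d` with `d = (v - a) mod n`, and as `v` runs over `v ≠ a`, `d` runs
over `1, …, n - 1`, where `∑ (n - 2 d) = 0`. -/

open Finset

def inversions {n : ℕ} (π : Equiv.Perm (Fin n)) : ℕ :=
  (Finset.univ.filter (fun p : Fin n × Fin n => p.1 < p.2 ∧ π p.2 < π p.1)).card

def winv {n : ℕ} (π : Equiv.Perm (Fin n)) : ℤ :=
  ∑ p ∈ Finset.univ.filter (fun p : Fin n × Fin n => p.1 < p.2 ∧ π p.2 < π p.1),
    ((π p.1 : ℤ) - (π p.2 : ℤ))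

def cwinv {n : ℕ} (π : Equiv.Perm (Fin n)) : ℤ :=
  n * inversions π - 2 * winv π

section PairSum

variable {α M : Type*} [AddCommMonoid M]

def pairSum {n : ℕ} (f : α → α → M) (g : Fin n → α) : M :=
  ∑ i, ∑ j, if i < j then f (g i) (g j) else 0

theorem pairSum_cons {n : ℕ} (f : α → α → M) (a : α) (g : Fin n → α) :
    pairSum f (Fin.cons a g : Fin (n + 1) → α) = ∑ j, f a (g j) + pairSum f g := by
  simp [pairSum, Fin.sum_univ_succ, Fin.succ_pos]

theorem pairSum_snoc {n : ℕ} (f : α → α → M) (g : Fin n → α) (a : α) :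
    pairSum f (Fin.snoc g a : Fin (n + 1) → α) = pairSum f g + ∑ i, f (g i) a := by
  simp [pairSum, Fin.sum_univ_castSucc, (Fin.castSucc_lt_last _).not_gt, sum_add_distrib]

theorem pairSum_comp_finRotate_add {n : ℕ} (f : α → α → M) (g : Fin (n + 1) → α) :
    pairSum f (g ∘ finRotate (n + 1)) + ∑ j, f (g 0) (g j)
      = pairSum f g + ∑ i, f (g i) (g 0) := by
  have hg : g = Fin.cons (g 0) (Fin.tail g) := (Fin.cons_self_tail g).symm
  have hrot : g ∘ finRotate (n + 1) = Fin.snoc (Fin.tail g) (g 0) := by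
    rw [Fin.snoc_eq_cons_rotate, ← hg]; rfl
  rw [hrot, pairSum_snoc]
  conv_rhs => rw [hg, pairSum_cons]
  simp only [Fin.sum_univ_succ, Fin.cons_zero, Fin.cons_succ, Fin.tail]
  abel

theorem pairSum_mul_finRotate_add {n : ℕ} (f : Fin (n + 1) → Fin (n + 1) → M)
    (σ : Equiv.Perm (Fin (n + 1))) :
    pairSum f ⇑(σ * finRotate (n + 1)) + ∑ v, f (σ 0) v = pairSum f σ + ∑ v, f v (σ 0) := by
  rw [← Equiv.sum_comp σ (f (σ 0)), ← Equiv.sum_comp σ (f · (σ 0)), Equiv.Perm.coe_mul]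
  exact pairSum_comp_finRotate_add f σ

end PairSum

def cwinvWeight (n : ℕ) (a b : Fin n) : ℤ :=
  if b < a then n - 2 * ((a : ℤ) - b) else 0

theorem cwinv_eq_pairSum {n : ℕ} (σ : Equiv.Perm (Fin n)) :
    cwinv σ = pairSum (cwinvWeight n) σ := by
  rw [cwinv, inversions, winv, card_eq_sum_ones, Nat.cast_sum, mul_sum, mul_sum,
    ← sum_sub_distrib, sum_filter, Fintype.sum_prod_type]
  refine sum_congr rfl fun i _ => sum_congr rfl fun j _ => ?_
  simp only [cwinvWeight, ite_and]
  split_ifs <;> push_cast; ring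

theorem cwinvWeight_sub_cwinvWeight {n : ℕ} (a v : Fin n) :
    cwinvWeight n v a - cwinvWeight n a v =
      if v = a then 0 else n - 2 * ((v - a : Fin n) : ℤ) := by
  unfold cwinvWeight
  rcases lt_trichotomy v a with h | rfl | h
  · rw [if_neg h.not_gt, if_pos h, if_neg h.ne, Fin.coe_sub_iff_lt.mpr h, Nat.cast_sub (by omega)]
    push_cast; ring
  · simp
  · rw [if_pos h, if_neg h.not_gt, if_neg h.ne', Fin.coe_sub_iff_le.mpr h.le,
      Nat.cast_sub (Fin.le_def.mp h.le)]
    ring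

theorem sum_cwinvWeight_left_eq_right {n : ℕ} (a : Fin n) :
    ∑ v, cwinvWeight n v a = ∑ v, cwinvWeight n a v := by
  have := a.neZero
  have hsum : ∑ v : Fin n, ((n : ℤ) - 2 * ((v - a : Fin n) : ℤ)) = n := by
    calc ∑ v : Fin n, ((n : ℤ) - 2 * ((v - a : Fin n) : ℤ))
        = ∑ d : Fin n, ((n : ℤ) - 2 * (d : ℤ)) :=
          (Equiv.subRight a).sum_comp fun d : Fin n => (n : ℤ) - 2 * (d : ℤ)
      _ = n := by
        have h := congrArg (Nat.cast : ℕ → ℤ) (sum_range_id_mul_two n)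
        push_cast [Nat.cast_sub NeZero.one_le] at h
        rw [sum_sub_distrib, ← mul_sum, Fin.sum_univ_eq_sum_range (fun i => (i : ℤ)), sum_const,
          card_univ, Fintype.card_fin, nsmul_eq_mul]
        linear_combination -h
  rw [← sub_eq_zero, ← sum_sub_distrib]
  simp only [cwinvWeight_sub_cwinvWeight]
  rw [sum_ite, sum_const_zero, zero_add, filter_ne', sum_erase_eq_sub (mem_univ a), hsum]
  simp

theorem cwinv_rotate {n : ℕ} (π : Equiv.Perm (Fin n)) :
    cwinv (π * finRotate n) = cwinv π := by
  cases n with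
  | zero => exact congrArg cwinv (Subsingleton.elim _ _)
  | succ m =>
    have h := pairSum_mul_finRotate_add (cwinvWeight (m + 1)) π
    rw [sum_cwinvWeight_left_eq_right] at h
    rw [cwinv_eq_pairSum, cwinv_eq_pairSum]
    exact add_right_cancel h
end

section
/- For any permutation π ∈ S_n, cwinv(π) + cwinv(π·w₀) = C(n, 3), where w₀ is the order-reversing permutation. -/
open Finset

private lemma sum_id_choose' (n : ℕ) : (∑ j ∈ range n, (j:ℤ)) = n.choose 2 := by
  induction n with
  | zero => simp
  | succ n ih =>
    rw [sum_range_succ, ih, Nat.choose_succ_succ, Nat.choose_one_right]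
    push_cast; ring

private lemma ch2' (j : ℕ) : 2 * (j.choose 2 : ℤ) = j * ((j:ℤ) - 1) := by
  induction j with
  | zero => simp
  | succ j ih =>
    rw [Nat.choose_succ_succ, Nat.choose_one_right]
    push_cast at *
    nlinarith [ih]

private lemma sum_tri_choose' (n : ℕ) :
    (∑ j ∈ range n, (j:ℤ)*((n:ℤ)-1-j)) = n.choose 3 := by
  induction n with
  | zero => simp
  | succ n ih =>
    rw [sum_range_succ]
    have h : ∀ j ∈ range n, (j:ℤ)*((↑(n+1):ℤ)-1-j) = (j:ℤ)*((n:ℤ)-1-j) + j := by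
      intro j _; push_cast; ring
    rw [Finset.sum_congr rfl h, Finset.sum_add_distrib, ih, sum_id_choose',
      Nat.choose_succ_succ n 2]
    push_cast; ring

private lemma step5' (n : ℕ) :
    ∑ p ∈ (univ : Finset (Fin n × Fin n)).filter (fun p => p.1 < p.2),
      ((n:ℤ) - 2*(((p.2 : Fin n) : ℤ) - ((p.1 : Fin n) : ℤ))) = n.choose 3 := by
  rw [Finset.sum_filter, Fintype.sum_prod_type, Finset.sum_comm]
  have inner : ∀ y : Fin n,
      (∑ x : Fin n, if x < y then ((n:ℤ) - 2*(((y:ℕ):ℤ) - ((x:ℕ):ℤ))) else 0)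
        = (y:ℕ) * ((n:ℤ) - 1 - (y:ℕ)) := by
    intro y
    have e1 : (∑ x : Fin n, if x < y then ((n:ℤ) - 2*(((y:ℕ):ℤ) - ((x:ℕ):ℤ))) else 0)
        = ∑ x ∈ range n, if x < (y:ℕ) then ((n:ℤ) - 2*(((y:ℕ):ℤ) - (x:ℤ))) else 0 := by
      rw [← Fin.sum_univ_eq_sum_range
        (fun x => if x < (y:ℕ) then ((n:ℤ) - 2*(((y:ℕ):ℤ) - (x:ℤ))) else 0) n]
      exact Finset.sum_congr rfl fun x _ => by simp only [Fin.lt_def]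
    rw [e1, ← Finset.sum_filter]
    have e2 : (range n).filter (fun x => x < (y:ℕ)) = range (y:ℕ) := by
      ext x; simp only [mem_filter, mem_range]
      have := y.isLt; omega
    rw [e2]
    have e3 : ∀ x ∈ range (y:ℕ), ((n:ℤ) - 2*(((y:ℕ):ℤ) - (x:ℤ)))
        = (((n:ℤ) - 2*((y:ℕ):ℤ)) + 2*(x:ℤ)) := by intros; ring
    rw [Finset.sum_congr rfl e3, Finset.sum_add_distrib, Finset.sum_const, card_range,
      ← Finset.mul_sum, sum_id_choose', nsmul_eq_mul, ch2']
    ring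
  calc ∑ y : Fin n, ∑ x : Fin n, (if x < y then ((n:ℤ) - 2*(((y:ℕ):ℤ) - ((x:ℕ):ℤ))) else 0)
      = ∑ y : Fin n, ((y:ℕ) : ℤ) * ((n:ℤ) - 1 - ((y:ℕ):ℤ)) :=
        Finset.sum_congr rfl fun y _ => inner y
    _ = ∑ j ∈ range n, (j:ℤ)*((n:ℤ)-1-j) :=
        Fin.sum_univ_eq_sum_range (fun j => (j:ℤ)*((n:ℤ)-1-j)) n
    _ = n.choose 3 := sum_tri_choose' n

private lemma L1' {n : ℕ} (π : Equiv.Perm (Fin n)) : cwinv π = ∑ p ∈ Finset.univ.filter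
    (fun p : Fin n × Fin n => p.1 < p.2 ∧ π p.2 < π p.1),
    ((n:ℤ) - 2*((π p.1 : ℤ) - (π p.2 : ℤ))) := by
  have h : ∀ s : Finset (Fin n × Fin n),
      ∑ p ∈ s, ((n:ℤ) - 2*((π p.1 : ℤ) - (π p.2 : ℤ)))
        = n * s.card - 2 * ∑ p ∈ s, ((π p.1 : ℤ) - (π p.2 : ℤ)) := by
    intro s
    rw [Finset.sum_sub_distrib, Finset.sum_const, ← Finset.mul_sum, nsmul_eq_mul]
    ring
  rw [h]
  unfold cwinv inversions winv
  norm_num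

private lemma L2' {n : ℕ} (π : Equiv.Perm (Fin n)) :
    cwinv (π * Fin.revPerm) = ∑ p ∈ Finset.univ.filter
    (fun p : Fin n × Fin n => p.1 < p.2 ∧ π p.1 < π p.2),
    ((n:ℤ) - 2*((π p.2 : ℤ) - (π p.1 : ℤ))) := by
  rw [L1']
  refine Finset.sum_bij' (fun p _ => (p.2.rev, p.1.rev)) (fun q _ => (q.2.rev, q.1.rev))
    ?_ ?_ ?_ ?_ ?_
  · intro p hp
    simp only [mem_filter, mem_univ, true_and, Equiv.Perm.mul_apply, Fin.revPerm_apply] at hp ⊢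
    exact ⟨Fin.rev_lt_rev.2 hp.1, hp.2⟩
  · intro q hq
    simp only [mem_filter, mem_univ, true_and, Equiv.Perm.mul_apply, Fin.revPerm_apply,
      Fin.rev_rev] at hq ⊢
    exact ⟨Fin.rev_lt_rev.2 hq.1, hq.2⟩
  · intro p _; simp [Fin.rev_rev]
  · intro q _; simp [Fin.rev_rev]
  · intro p _
    simp only [Equiv.Perm.mul_apply, Fin.revPerm_apply]

theorem cwinv_add_cwinv_w0 {n : ℕ} (π : Equiv.Perm (Fin n)) :
    cwinv π + cwinv (π * Fin.revPerm) = n.choose 3 := by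
  classical
  set A := Finset.univ.filter
    (fun p : Fin n × Fin n => p.1 < p.2 ∧ π p.2 < π p.1) with hA
  set C := Finset.univ.filter
    (fun p : Fin n × Fin n => p.1 < p.2 ∧ π p.1 < π p.2) with hC
  set D := (univ : Finset (Fin n × Fin n)).filter (fun p => p.1 < p.2) with hD
  have hdisj : Disjoint A C := by
    rw [Finset.disjoint_left]
    intro p hp hq
    rw [hA, mem_filter] at hp
    rw [hC, mem_filter] at hq
    exact absurd (hp.2.2.trans hq.2.2) (lt_irrefl _)
  have hunion : A ∪ C = D := by
    ext p
    simp only [hA, hC, hD, mem_union, mem_filter, mem_univ, true_and]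
    constructor
    · rintro (⟨h, _⟩ | ⟨h, _⟩) <;> exact h
    · intro h
      have hne : π p.1 ≠ π p.2 := fun he => absurd (π.injective he) (ne_of_lt h)
      rcases hne.lt_or_gt with h' | h'
      · exact Or.inr ⟨h, h'⟩
      · exact Or.inl ⟨h, h'⟩
  -- combine into a single sum over D with absolute values
  have hsum : cwinv π + cwinv (π * Fin.revPerm)
      = ∑ p ∈ D, ((n:ℤ) - 2*|(π p.1 : ℤ) - (π p.2 : ℤ)|) := by
    rw [L1', L2', ← hA, ← hC, ← hunion, Finset.sum_union hdisj]
    congr 1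
    · refine Finset.sum_congr rfl fun p hp => ?_
      rw [hA, mem_filter] at hp
      have : (π p.2 : ℤ) < (π p.1 : ℤ) := by exact_mod_cast hp.2.2
      rw [abs_of_nonneg (by linarith)]
    · refine Finset.sum_congr rfl fun p hp => ?_
      rw [hC, mem_filter] at hp
      have : (π p.1 : ℤ) < (π p.2 : ℤ) := by exact_mod_cast hp.2.2
      rw [abs_of_nonpos (by linarith)]
      ring
  -- the sum is invariant under reindexing by π
  set E := (univ : Finset (Fin n × Fin n)).filter (fun p => p.1 ≠ p.2) with hE
  set D' := (univ : Finset (Fin n × Fin n)).filter (fun p => p.2 < p.1) with hD'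
  have hsplit : ∀ F : Fin n × Fin n → ℤ, (∀ p, F (p.2, p.1) = F p) →
      ∑ p ∈ E, F p = 2 * ∑ p ∈ D, F p := by
    intro F hsymm
    have hdisj2 : Disjoint D D' := by
      rw [Finset.disjoint_left]
      intro p hp hq
      rw [hD, mem_filter] at hp
      rw [hD', mem_filter] at hq
      exact absurd (hp.2.trans hq.2) (lt_irrefl _)
    have hu2 : D ∪ D' = E := by
      ext p
      simp only [hD, hD', hE, mem_union, mem_filter, mem_univ, true_and]
      constructor
      · rintro (h | h)
        · exact ne_of_lt h
        · exact (ne_of_lt h).symm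
      · intro h
        rcases h.lt_or_gt with h' | h'
        · exact Or.inl h'
        · exact Or.inr h'
    have hDD' : ∑ p ∈ D', F p = ∑ p ∈ D, F p := by
      refine Finset.sum_equiv (Equiv.prodComm (Fin n) (Fin n)) ?_ ?_
      · intro p
        simp only [hD, hD', mem_filter, mem_univ, true_and, Equiv.prodComm_apply, Prod.fst_swap,
          Prod.snd_swap]
      · intro p _
        rw [← hsymm p]; rfl
    rw [← hu2, Finset.sum_union hdisj2, hDD']
    ring
  have hreindex : ∑ p ∈ D, ((n:ℤ) - 2*|(π p.1 : ℤ) - (π p.2 : ℤ)|)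
      = ∑ p ∈ D, ((n:ℤ) - 2*|((p.1 : Fin n) : ℤ) - ((p.2 : Fin n) : ℤ)|) := by
    have hE1 : ∑ p ∈ E, ((n:ℤ) - 2*|(π p.1 : ℤ) - (π p.2 : ℤ)|)
        = ∑ p ∈ E, ((n:ℤ) - 2*|((p.1 : Fin n) : ℤ) - ((p.2 : Fin n) : ℤ)|) := by
      refine Finset.sum_equiv (Equiv.prodCongr π π) ?_ ?_
      · intro p
        simp only [hE, mem_filter, mem_univ, true_and, Equiv.prodCongr_apply, Prod.map]
        exact π.injective.ne_iff.symm
      · intro p _; rfl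
    have h1 := hsplit (fun p => (n:ℤ) - 2*|(π p.1 : ℤ) - (π p.2 : ℤ)|)
      (fun p => by simp [abs_sub_comm])
    have h2 := hsplit (fun p => (n:ℤ) - 2*|((p.1 : Fin n) : ℤ) - ((p.2 : Fin n) : ℤ)|)
      (fun p => by simp [abs_sub_comm])
    have := h1.symm.trans (hE1.trans h2)
    linarith
  have hfinal : ∑ p ∈ D, ((n:ℤ) - 2*|((p.1 : Fin n) : ℤ) - ((p.2 : Fin n) : ℤ)|)
      = (n.choose 3 : ℤ) := by
    rw [← step5' n, ← hD]
    refine Finset.sum_congr rfl fun p hp => ?_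
    rw [hD, mem_filter] at hp
    have : ((p.1 : Fin n) : ℤ) < ((p.2 : Fin n) : ℤ) := by exact_mod_cast hp.2
    rw [abs_of_nonpos (by linarith)]
    ring
  rw [hsum, hreindex, hfinal]
end

section
/- For every permutation π ∈ S_n, 0 ≤ cwinv(π) ≤ C(n, 3), with the minimum attained at the identity and the maximum at the order-reversing permutation w₀. -/
open Finset

namespace CwinvAux

variable {n : ℕ}

def assoc : (Fin n × Fin n) × Fin n ≃ Fin n × Fin n × Fin n where
  toFun q := (q.1.1, q.1.2, q.2)
  invFun t := ((t.1, t.2.1), t.2.2)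
  left_inv q := rfl
  right_inv t := rfl

def gval (a b c : Fin n) : ℤ := if c < b then 1 else if a < c then 1 else -1

def W (π : Equiv.Perm (Fin n)) (i j k : Fin n) : ℤ :=
  if i < j ∧ k ≠ i ∧ k ≠ j ∧ π j < π i then gval (π i) (π j) (π k) else 0

lemma sum_gval (a b : Fin n) (hba : b < a) :
    ∑ c : Fin n, (if c ≠ a ∧ c ≠ b then gval a b c else 0)
      = (n : ℤ) - 2 * ((a : ℤ) - (b : ℤ)) := by
  have step : ∀ c : Fin n, (if c ≠ a ∧ c ≠ b then gval a b c else 0)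
      = ((if c < b then (2:ℤ) else 0) + (if a < c then (2:ℤ) else 0) - 1)
        + (if c = a then (1:ℤ) else 0) + (if c = b then (1:ℤ) else 0) := by
    intro c
    unfold gval
    simp only [Fin.lt_def, ne_eq, Fin.ext_iff]
    split_ifs <;> omega
  rw [Finset.sum_congr rfl (fun c _ => step c)]
  have h1 : ∑ c : Fin n, (if c < b then (2:ℤ) else 0) = 2 * (b : ℤ) := by
    rw [Finset.sum_ite, Finset.sum_const, Finset.sum_const_zero, add_zero]
    have : Finset.univ.filter (fun c : Fin n => c < b) = Finset.Iio b := by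
      ext c; simp
    rw [this, Fin.card_Iio]
    push_cast
    ring
  have h2 : ∑ c : Fin n, (if a < c then (2:ℤ) else 0)
      = 2 * ((n : ℤ) - 1 - (a : ℤ)) := by
    rw [Finset.sum_ite, Finset.sum_const, Finset.sum_const_zero, add_zero]
    have : Finset.univ.filter (fun c : Fin n => a < c) = Finset.Ioi a := by
      ext c; simp
    rw [this, Fin.card_Ioi]
    have ha := a.is_lt
    have : ((n - 1 - (a : ℕ) : ℕ) : ℤ) = (n : ℤ) - 1 - (a : ℤ) := by omega
    rw [nsmul_eq_mul, this]; ring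
  have h3 : ∑ c : Fin n, (if c = a then (1:ℤ) else 0) = 1 := by simp
  have h4 : ∑ c : Fin n, (if c = b then (1:ℤ) else 0) = 1 := by simp
  simp only [Finset.sum_add_distrib, Finset.sum_sub_distrib, h1, h2, h3, h4,
    Finset.sum_const, Finset.card_univ, Fintype.card_fin, nsmul_eq_mul, mul_one]
  ring

lemma cwinv_eq_sum_W (π : Equiv.Perm (Fin n)) :
    cwinv π = ∑ t : Fin n × Fin n × Fin n, W π t.1 t.2.1 t.2.2 := by
  have hre : ∑ t : Fin n × Fin n × Fin n, W π t.1 t.2.1 t.2.2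
      = ∑ q : (Fin n × Fin n) × Fin n, W π q.1.1 q.1.2 q.2 :=
    (Fintype.sum_equiv (assoc (n := n)) (fun q : (Fin n × Fin n) × Fin n => W π q.1.1 q.1.2 q.2)
      (fun t : Fin n × Fin n × Fin n => W π t.1 t.2.1 t.2.2) (fun q => rfl)).symm
  rw [hre, Fintype.sum_prod_type]
  have inner : ∀ p : Fin n × Fin n, ∑ k : Fin n, W π p.1 p.2 k
      = if p.1 < p.2 ∧ π p.2 < π p.1 then
          ((n : ℤ) - 2 * ((π p.1 : ℤ) - (π p.2 : ℤ))) else 0 := by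
    rintro ⟨i, j⟩
    by_cases h : i < j ∧ π j < π i
    · rw [if_pos h]
      have hW : ∀ k, W π i j k
          = (fun c => if c ≠ π i ∧ c ≠ π j then gval (π i) (π j) c else 0) (π k) := by
        intro k
        unfold W
        simp only [ne_eq, EmbeddingLike.apply_eq_iff_eq]
        split_ifs <;> tauto
      rw [Finset.sum_congr rfl (fun k _ => hW k),
        Equiv.sum_comp π (fun c => if c ≠ π i ∧ c ≠ π j then gval (π i) (π j) c else 0),
        sum_gval _ _ h.2]
    · simp only [h, if_false]
      apply Finset.sum_eq_zero
      intro k _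
      unfold W
      rw [if_neg]
      tauto
  rw [Finset.sum_congr rfl (fun p _ => inner p)]
  unfold cwinv inversions winv
  rw [← Finset.sum_filter]
  simp only [Finset.sum_sub_distrib, Finset.sum_const, nsmul_eq_mul, ← Finset.mul_sum]
  push_cast
  ring

def sw : (Fin n × Fin n × Fin n) ≃ (Fin n × Fin n × Fin n) where
  toFun t := (t.1, t.2.2, t.2.1)
  invFun t := (t.1, t.2.2, t.2.1)
  left_inv t := rfl
  right_inv t := rfl

def cyc : (Fin n × Fin n × Fin n) ≃ (Fin n × Fin n × Fin n) where
  toFun t := (t.2.2, t.1, t.2.1)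
  invFun t := (t.2.1, t.2.2, t.1)
  left_inv t := rfl
  right_inv t := rfl

lemma sum_W_eq_sum_T (π : Equiv.Perm (Fin n)) :
    ∑ t : Fin n × Fin n × Fin n, W π t.1 t.2.1 t.2.2
      = ∑ t : Fin n × Fin n × Fin n,
          (if t.1 < t.2.1 ∧ t.2.1 < t.2.2 then
            W π t.1 t.2.1 t.2.2 + W π t.1 t.2.2 t.2.1 + W π t.2.1 t.2.2 t.1 else 0) := by
  have dec : ∀ i j k : Fin n, W π i j k
      = (if i < j ∧ j < k then W π i j k else 0)
      + (if i < k ∧ k < j then W π i j k else 0)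
      + (if k < i ∧ i < j then W π i j k else 0) := by
    intro i j k
    unfold W
    generalize gval (π i) (π j) (π k) = v
    simp only [Fin.lt_def, ne_eq, Fin.ext_iff]
    split_ifs <;> omega
  rw [Finset.sum_congr rfl (fun t _ => dec t.1 t.2.1 t.2.2)]
  rw [Finset.sum_add_distrib, Finset.sum_add_distrib]
  have h2 : ∑ t : Fin n × Fin n × Fin n,
      (if t.1 < t.2.2 ∧ t.2.2 < t.2.1 then W π t.1 t.2.1 t.2.2 else 0)
      = ∑ t : Fin n × Fin n × Fin n,
          (if t.1 < t.2.1 ∧ t.2.1 < t.2.2 then W π t.1 t.2.2 t.2.1 else 0) := by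
    exact Fintype.sum_equiv (sw (n := n))
      (fun t : Fin n × Fin n × Fin n =>
        if t.1 < t.2.2 ∧ t.2.2 < t.2.1 then W π t.1 t.2.1 t.2.2 else 0)
      (fun t : Fin n × Fin n × Fin n =>
        if t.1 < t.2.1 ∧ t.2.1 < t.2.2 then W π t.1 t.2.2 t.2.1 else 0)
      (fun t => rfl)
  have h3 : ∑ t : Fin n × Fin n × Fin n,
      (if t.2.2 < t.1 ∧ t.1 < t.2.1 then W π t.1 t.2.1 t.2.2 else 0)
      = ∑ t : Fin n × Fin n × Fin n,
          (if t.1 < t.2.1 ∧ t.2.1 < t.2.2 then W π t.2.1 t.2.2 t.1 else 0) := by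
    exact Fintype.sum_equiv (cyc (n := n))
      (fun t : Fin n × Fin n × Fin n =>
        if t.2.2 < t.1 ∧ t.1 < t.2.1 then W π t.1 t.2.1 t.2.2 else 0)
      (fun t : Fin n × Fin n × Fin n =>
        if t.1 < t.2.1 ∧ t.2.1 < t.2.2 then W π t.2.1 t.2.2 t.1 else 0)
      (fun t => rfl)
  rw [h2, h3, ← Finset.sum_add_distrib, ← Finset.sum_add_distrib]
  apply Finset.sum_congr rfl
  intro t _
  split_ifs <;> ring

lemma T_bounds (π : Equiv.Perm (Fin n)) (x y z : Fin n) (hxy : x < y) (hyz : y < z) :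
    0 ≤ W π x y z + W π x z y + W π y z x ∧
      W π x y z + W π x z y + W π y z x ≤ 1 := by
  have hpxy : (π x : ℕ) ≠ (π y : ℕ) := by
    simp only [ne_eq, ← Fin.ext_iff]
    exact fun h => absurd (π.injective h) (ne_of_lt hxy)
  have hpyz : (π y : ℕ) ≠ (π z : ℕ) := by
    simp only [ne_eq, ← Fin.ext_iff]
    exact fun h => absurd (π.injective h) (ne_of_lt hyz)
  have hpxz : (π x : ℕ) ≠ (π z : ℕ) := by
    simp only [ne_eq, ← Fin.ext_iff]
    exact fun h => absurd (π.injective h) (ne_of_lt (hxy.trans hyz))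
  have hxy' : (x : ℕ) < y := hxy
  have hyz' : (y : ℕ) < z := hyz
  unfold W gval
  simp only [Fin.lt_def, ne_eq, Fin.ext_iff]
  split_ifs <;> omega

lemma count_triples :
    ∑ t : Fin n × Fin n × Fin n,
        (if t.1 < t.2.1 ∧ t.2.1 < t.2.2 then (1:ℤ) else 0) = n.choose 3 := by
  have key : ∀ m : ℕ, ∑ y ∈ Finset.range m, y * (m - 1 - y) = m.choose 3 := by
    intro m
    induction m with
    | zero => rfl
    | succ m ih =>
      rw [Finset.sum_range_succ]
      have : ∀ y ∈ Finset.range m, y * (m + 1 - 1 - y) = y * (m - 1 - y) + y := by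
        intro y hy
        rw [Finset.mem_range] at hy
        have : m + 1 - 1 - y = (m - 1 - y) + 1 := by omega
        rw [this, Nat.mul_add, Nat.mul_one]
      have h0 : m + 1 - 1 - m = 0 := by omega
      rw [Finset.sum_congr rfl this, Finset.sum_add_distrib, ih, Finset.sum_range_id,
        Nat.choose_succ_succ' m 2, Nat.choose_two_right, h0, Nat.mul_zero]
      have h23 : m.choose (2 + 1) = m.choose 3 := by norm_num
      rw [h23]
      omega
  have flat : ∑ t : Fin n × Fin n × Fin n,
      (if t.1 < t.2.1 ∧ t.2.1 < t.2.2 then (1:ℤ) else 0)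
      = ∑ q : (Fin n × Fin n) × Fin n,
          (if q.1.1 < q.1.2 ∧ q.1.2 < q.2 then (1:ℤ) else 0) :=
    (Fintype.sum_equiv (assoc (n := n))
      (fun q : (Fin n × Fin n) × Fin n => if q.1.1 < q.1.2 ∧ q.1.2 < q.2 then (1:ℤ) else 0)
      (fun t : Fin n × Fin n × Fin n => if t.1 < t.2.1 ∧ t.2.1 < t.2.2 then (1:ℤ) else 0)
      (fun q => rfl)).symm
  rw [flat, Fintype.sum_prod_type]
  have inner : ∀ p : (Fin n × Fin n), ∑ z : Fin n, (if p.1 < p.2 ∧ p.2 < z then (1:ℤ) else 0)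
      = if p.1 < p.2 then ((n - 1 - (p.2 : ℕ) : ℕ) : ℤ) else 0 := by
    rintro ⟨x, y⟩
    by_cases h : x < y
    · simp only [h, true_and, if_true]
      rw [Finset.sum_ite, Finset.sum_const, Finset.sum_const_zero, add_zero]
      have : Finset.univ.filter (fun z : Fin n => y < z) = Finset.Ioi y := by
        ext z; simp
      rw [this, Fin.card_Ioi, nsmul_eq_mul, mul_one]
    · simp [h]
  rw [Finset.sum_congr rfl (fun p _ => inner p), Fintype.sum_prod_type]
  have inner2 : ∀ y : Fin n,
      (∑ x : Fin n, if x < y then ((n - 1 - (y : ℕ) : ℕ) : ℤ) else 0)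
        = ((y : ℕ) * (n - 1 - (y : ℕ)) : ℕ) := by
    intro y
    rw [Finset.sum_ite, Finset.sum_const, Finset.sum_const_zero, add_zero]
    have : Finset.univ.filter (fun x : Fin n => x < y) = Finset.Iio y := by
      ext x; simp
    rw [this, Fin.card_Iio, nsmul_eq_mul]
    push_cast
    ring
  rw [Finset.sum_comm]
  rw [Finset.sum_congr rfl (fun y _ => inner2 y)]
  rw [Fin.sum_univ_eq_sum_range (fun y => (((y * (n - 1 - y)) : ℕ) : ℤ)) n]
  rw [← Nat.cast_sum, key n]

lemma T_id (x y z : Fin n) :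
    (if x < y ∧ y < z then
      W 1 x y z + W 1 x z y + W 1 y z x else 0) = 0 := by
  have hW : ∀ i j k : Fin n, W 1 i j k = 0 := by
    intro i j k
    unfold W
    rw [if_neg]
    simp only [Equiv.Perm.one_apply]
    rintro ⟨h1, _, _, h4⟩
    exact absurd h4 (not_lt.mpr h1.le)
  simp [hW]

lemma T_rev (x y z : Fin n) (hxy : x < y) (hyz : y < z) :
    W Fin.revPerm x y z + W Fin.revPerm x z y + W Fin.revPerm y z x = 1 := by
  have hx := x.is_lt
  have hy := y.is_lt
  have hz := z.is_lt
  have hxy' : (x : ℕ) < y := hxy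
  have hyz' : (y : ℕ) < z := hyz
  unfold W gval
  simp only [Fin.revPerm_apply, Fin.lt_def, Fin.val_rev, ne_eq, Fin.ext_iff]
  split_ifs <;> omega

end CwinvAux

open CwinvAux in
theorem cwinv_bounds {n : ℕ} (π : Equiv.Perm (Fin n)) :
    0 ≤ cwinv π ∧ cwinv π ≤ n.choose 3 ∧
    cwinv (1 : Equiv.Perm (Fin n)) = 0 ∧
    cwinv (Fin.revPerm : Equiv.Perm (Fin n)) = n.choose 3 := by
  have main : ∀ σ : Equiv.Perm (Fin n), cwinv σ
      = ∑ t : Fin n × Fin n × Fin n,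
          (if t.1 < t.2.1 ∧ t.2.1 < t.2.2 then
            W σ t.1 t.2.1 t.2.2 + W σ t.1 t.2.2 t.2.1 + W σ t.2.1 t.2.2 t.1 else 0) := by
    intro σ
    rw [cwinv_eq_sum_W, sum_W_eq_sum_T]
  refine ⟨?_, ?_, ?_, ?_⟩
  · rw [main π]
    apply Finset.sum_nonneg
    intro t _
    split_ifs with h
    · exact (T_bounds π t.1 t.2.1 t.2.2 h.1 h.2).1
    · exact le_refl 0
  · rw [main π, ← count_triples]
    apply Finset.sum_le_sum
    intro t _
    split_ifs with h
    · exact (T_bounds π t.1 t.2.1 t.2.2 h.1 h.2).2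
    · exact le_refl 0
  · rw [main 1]
    exact Finset.sum_eq_zero (fun t _ => T_id t.1 t.2.1 t.2.2)
  · rw [main Fin.revPerm, ← count_triples]
    apply Finset.sum_congr rfl
    intro t _
    split_ifs with h
    · exact T_rev t.1 t.2.1 t.2.2 h.1 h.2
    · rfl
end

section
/- For every permutation π ∈ S_n, the sum Σ_{i=1}^n inv(π·c_n^i) equals cwinv(π) + C(n+1, 3), where c_n is the n-cycle (1,2,…,n). -/
open Finset

/-!
With `c = finRotate n` we have `(π * c ^ j) x = π (x + j)` in `ℤ/n`. Shifting both positions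
of a pair by `-j`, an ordered pair of positions `(x, y)` with `π y < π x` is counted in
`inv (π * c ^ j)` exactly when `x - j < y - j`, which happens for `(x - y) mod n` values of `j`.
Since `(x - y) mod n = x - y + n [x < y]`, the sum is `n inv π + ∑_{π y < π x} (x - y)`.
As `π x` counts the `y` with `π y < π x`, this last sum is `∑_x (2 π x - (n - 1)) x`, while
`∑_{y < x} (π x - π y) = ∑_x (2 x - (n - 1)) π x`; the two agree because `∑ π x = ∑ x`, and the
second one is `C(n + 1, 3) - 2 winv π`.
-/

theorem sum_range_two_mul_sub_mul (n : ℕ) :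
    ∑ i ∈ range n, (2 * (i : ℤ) - (n - 1)) * i = (n + 1).choose 3 := by
  induction n with
  | zero => simp [Nat.choose_eq_zero_of_lt]
  | succ n ih =>
    have hgauss : (∑ i ∈ range n, (i : ℤ) + n) * 2 = ((n : ℤ) + 1) * n := by
      have := congrArg (Nat.cast : ℕ → ℤ) (sum_range_id_mul_two (n + 1))
      push_cast [sum_range_succ] at this
      linarith
    have hchoose : ((n : ℤ) + 1) * n = ((n + 1).choose 2 : ℤ) * 2 := by
      exact_mod_cast Nat.choose_one_right n ▸ Nat.add_one_mul_choose_eq n 1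
    have hshift : ∑ i ∈ range n, (2 * (i : ℤ) - ((n + 1 : ℕ) - 1)) * i
        = ∑ i ∈ range n, (2 * (i : ℤ) - (n - 1)) * i - ∑ i ∈ range n, (i : ℤ) := by
      rw [← sum_sub_distrib]
      exact sum_congr rfl fun i _ => by push_cast; ring
    rw [sum_range_succ, hshift, ih, Nat.choose_succ_succ' (n + 1) 2]
    push_cast
    linarith

open Fin.NatCast

section

variable {n : ℕ}

theorem finRotate_pow_apply [NeZero n] (i : ℕ) (x : Fin n) : (finRotate n ^ i) x = x + i := by
  induction i with
  | zero => simp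
  | succ i ih =>
    rw [pow_succ', Equiv.Perm.mul_apply, finRotate_apply, ih, Nat.cast_succ, add_assoc]

theorem sum_Icc_one_natCast {M : Type*} [AddCommMonoid M] [NeZero n] (f : Fin n → M) :
    ∑ i ∈ Icc 1 n, f i = ∑ j, f j := by
  rw [← Ico_add_one_right_eq_Icc, ← zero_add 1, ← sum_Ico_add', ← range_eq_Ico,
    ← Fin.sum_univ_eq_sum_range (fun i => f ↑(i + 1))]
  simp only [Nat.cast_add, Fin.cast_val_eq_self, Nat.cast_one]
  exact Fintype.sum_equiv (Equiv.addRight 1) _ _ fun _ => rfl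

theorem card_filter_add_lt_self (e : Fin n) : #{u : Fin n | u + e < u} = e := by
  have h : univ.filter (fun u : Fin n => u + e < u) = univ.filter (fun u : Fin n => ¬ u < n - e) :=
    filter_congr fun u _ => by fin_omega
  rw [h, filter_not, card_sdiff_of_subset (filter_subset _ _), Fin.card_filter_val_lt, card_univ,
    Fintype.card_fin]
  omega

theorem card_filter_sub_lt_sub [NeZero n] (x y : Fin n) :
    #{j : Fin n | x - j < y - j} = (x - y : Fin n) := by
  rw [← card_filter_add_lt_self]
  exact card_equiv (Equiv.subLeft y) fun j => by simp

theorem sum_inversions_mul_finRotate_pow [NeZero n] (π : Equiv.Perm (Fin n)) :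
    ∑ i ∈ Icc 1 n, inversions (π * finRotate n ^ i)
      = ∑ p : Fin n × Fin n with π p.2 < π p.1, ((p.1 - p.2 : Fin n) : ℕ) := by
  simp only [inversions, Equiv.Perm.mul_apply, finRotate_pow_apply]
  rw [sum_Icc_one_natCast
    (fun j => #{p : Fin n × Fin n | p.1 < p.2 ∧ π (p.2 + j) < π (p.1 + j)})]
  have shift (j : Fin n) : #{p : Fin n × Fin n | p.1 < p.2 ∧ π (p.2 + j) < π (p.1 + j)}
      = #{q : Fin n × Fin n | q.1 - j < q.2 - j ∧ π q.2 < π q.1} :=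
    card_equiv (Equiv.addRight (j, j)) fun p => by simp
  simp only [shift, card_filter, ← card_filter_sub_lt_sub]
  rw [sum_comm, sum_filter]
  refine sum_congr rfl fun q _ => ?_
  by_cases h : π q.2 < π q.1 <;> simp [h]

theorem sum_filter_perm_lt_val_sub [NeZero n] (π : Equiv.Perm (Fin n)) :
    ∑ p : Fin n × Fin n with π p.2 < π p.1, (((p.1 - p.2 : Fin n) : ℕ) : ℤ)
      = n * inversions π + ∑ p : Fin n × Fin n with π p.2 < π p.1, ((p.1 : ℤ) - p.2) := by
  simp only [Fin.intCast_val_sub_eq_sub_add_ite, sum_add_distrib, Nat.cast_ite, Nat.cast_zero,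
    sum_ite, sum_const_zero, zero_add, sum_const, filter_filter, nsmul_eq_mul, inversions]
  rw [add_comm, mul_comm]
  congr 4
  ext p
  simp [and_comm]

theorem card_filter_perm_lt (σ : Equiv.Perm (Fin n)) (k : Fin n) : #{y | σ y < k} = k := by
  rw [card_equiv σ (t := {y | y < k}) (by simp), filter_gt_eq_Iio, Fin.card_Iio]

theorem card_filter_lt_perm (σ : Equiv.Perm (Fin n)) (k : Fin n) :
    #{y | k < σ y} = n - 1 - k := by
  rw [card_equiv σ (t := {y | k < y}) (by simp), filter_lt_eq_Ioi, Fin.card_Ioi]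

theorem sum_filter_perm_lt_sub (σ : Equiv.Perm (Fin n)) (f : Fin n → ℤ) :
    ∑ p : Fin n × Fin n with σ p.2 < σ p.1, (f p.1 - f p.2)
      = ∑ x, (2 * (σ x : ℤ) - (n - 1)) * f x := by
  have hfst : ∑ p : Fin n × Fin n with σ p.2 < σ p.1, f p.1
      = ∑ x, (σ x : ℤ) * f x := by
    rw [sum_filter, Fintype.sum_prod_type]
    refine sum_congr rfl fun x _ => ?_
    rw [← sum_filter]
    simp only [sum_const, card_filter_perm_lt, nsmul_eq_mul]
  have hsnd : ∑ p : Fin n × Fin n with σ p.2 < σ p.1, f p.2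
      = ∑ y, ((n : ℤ) - 1 - σ y) * f y := by
    rw [sum_filter, Fintype.sum_prod_type_right]
    refine sum_congr rfl fun y _ => ?_
    rw [← sum_filter]
    simp only [sum_const, card_filter_lt_perm, nsmul_eq_mul]
    have := (σ y).isLt
    congr 1
    omega
  rw [sum_sub_distrib, hfst, hsnd, ← sum_sub_distrib]
  exact sum_congr rfl fun x _ => by ring

theorem sum_filter_perm_lt_sub_comm (σ : Equiv.Perm (Fin n)) :
    ∑ p : Fin n × Fin n with σ p.2 < σ p.1, ((p.1 : ℤ) - p.2)
      = ∑ p : Fin n × Fin n with p.2 < p.1, ((σ p.1 : ℤ) - σ p.2) := by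
  have hsum : ∑ x, (σ x : ℤ) = ∑ x : Fin n, (x : ℤ) := Equiv.sum_comp σ (fun x => (x : ℤ))
  calc ∑ p : Fin n × Fin n with σ p.2 < σ p.1, ((p.1 : ℤ) - p.2)
      = ∑ x : Fin n, ((2 * (x : ℤ) - (n - 1)) * σ x + (n - 1) * ((σ x : ℤ) - x)) := by
        rw [sum_filter_perm_lt_sub σ (fun x => (x : ℤ))]
        exact sum_congr rfl fun x _ => by ring
    _ = ∑ x : Fin n, (2 * (x : ℤ) - (n - 1)) * σ x := by
        rw [sum_add_distrib, ← mul_sum, sum_sub_distrib, hsum, sub_self, mul_zero, add_zero]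
    _ = _ := (sum_filter_perm_lt_sub 1 (fun x => (σ x : ℤ))).symm

theorem sum_filter_lt_sub :
    ∑ p : Fin n × Fin n with p.2 < p.1, ((p.1 : ℤ) - p.2) = (n + 1).choose 3 := by
  rw [← sum_range_two_mul_sub_mul,
    ← Fin.sum_univ_eq_sum_range (fun i => (2 * (i : ℤ) - (n - 1)) * i)]
  exact sum_filter_perm_lt_sub 1 (fun x => (x : ℤ))

theorem two_mul_winv (π : Equiv.Perm (Fin n)) :
    2 * winv π
      = ∑ p : Fin n × Fin n with π p.2 < π p.1, ((π p.1 : ℤ) - π p.2)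
        - ∑ p : Fin n × Fin n with p.2 < p.1, ((π p.1 : ℤ) - π p.2) := by
  have hswap : winv π
      = ∑ p : Fin n × Fin n with p.2 < p.1 ∧ π p.1 < π p.2, ((π p.2 : ℤ) - π p.1) :=
    sum_equiv (Equiv.prodComm _ _) (by simp) (by simp)
  rw [two_mul]
  nth_rewrite 2 [hswap]
  simp only [winv, sum_filter, ← sum_add_distrib, ← sum_sub_distrib]
  refine sum_congr rfl fun p _ => ?_
  have hinj := π.injective.eq_iff (a := p.1) (b := p.2)
  split_ifs <;> grind

theorem sum_filter_lt_perm_sub (π : Equiv.Perm (Fin n)) :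
    ∑ p : Fin n × Fin n with p.2 < p.1, ((π p.1 : ℤ) - π p.2)
      = (n + 1).choose 3 - 2 * winv π := by
  have hrelabel : ∑ p : Fin n × Fin n with π p.2 < π p.1, ((π p.1 : ℤ) - π p.2)
      = ∑ p : Fin n × Fin n with p.2 < p.1, ((p.1 : ℤ) - p.2) :=
    sum_equiv (π.prodCongr π) (by simp) (by simp)
  rw [two_mul_winv, hrelabel, sum_filter_lt_sub]
  ring

end

theorem sum_inv_coset {n : ℕ} (π : Equiv.Perm (Fin n)) :
    ∑ i ∈ Finset.Icc 1 n, (inversions (π * (finRotate n) ^ i) : ℤ)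
      = cwinv π + (n + 1).choose 3 := by
  rcases eq_or_ne n 0 with rfl | hn
  · simp [cwinv, winv, inversions, Nat.choose_eq_zero_of_lt]
  have : NeZero n := ⟨hn⟩
  rw [← Nat.cast_sum, sum_inversions_mul_finRotate_pow, Nat.cast_sum, sum_filter_perm_lt_val_sub,
    sum_filter_perm_lt_sub_comm, sum_filter_lt_perm_sub, cwinv]
  ring
end

section
/- For every permutation π ∈ S_n and every 0 ≤ i ≤ n, inv(π·c_n^i) − inv(π) = i(n+1) − 2·Σ_{j=1}^i π(j), where c_n is the n-cycle (1,2,…,n). -/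
open Finset

/-!
Right multiplication by `c_n` moves the first letter `σ(1)` of the one-line word of `σ` to the
end. The `σ(1) - 1` inversions it formed with the smaller later letters disappear and the
`n - σ(1)` larger letters now form inversions with it, so `inv` grows by `n + 1 - 2 σ(1)`.
Since `π c_n^i` starts with `π(i + 1)`, summing these increments over `i` gives the formula.
-/

def invCount {α : Type*} [LinearOrder α] {n : ℕ} (f : Fin n → α) : ℕ :=
  #{p : Fin n × Fin n | p.1 < p.2 ∧ f p.2 < f p.1}

lemma init_comp_finRotate {α : Type*} {n : ℕ} (f : Fin (n + 1) → α) :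
    Fin.init (f ∘ finRotate (n + 1)) = Fin.tail f := by
  funext j
  simp [Fin.init, Fin.tail]

section
variable {α : Type*} [LinearOrder α] {n : ℕ}

lemma invCount_eq_sum (f : Fin n → α) :
    invCount f = ∑ i, ∑ j, if i < j ∧ f j < f i then 1 else 0 := by
  rw [invCount, card_filter, Fintype.sum_prod_type]

lemma invCount_eq_invCount_tail_add (f : Fin (n + 1) → α) :
    invCount f = invCount (Fin.tail f) + #{j | f j < f 0} := by
  rw [invCount_eq_sum, invCount_eq_sum, card_filter, Fin.sum_univ_succ, add_comm]
  simp only [Fin.sum_univ_succ (n := n), Fin.succ_pos, Fin.succ_lt_succ_iff, Fin.not_lt_zero,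
    lt_self_iff_false, true_and, false_and, if_false, zero_add, Fin.tail]
  rfl

lemma invCount_eq_invCount_init_add (f : Fin (n + 1) → α) :
    invCount f = invCount (Fin.init f) + #{j | f (Fin.last n) < f j} := by
  rw [invCount_eq_sum, invCount_eq_sum, card_filter, Fin.sum_univ_castSucc]
  simp only [Fin.sum_univ_castSucc (n := n), Fin.castSucc_lt_last, Fin.castSucc_lt_castSucc_iff,
    not_lt.2 (Fin.le_last _), lt_self_iff_false, true_and, false_and, if_false, add_zero,
    sum_const_zero, Fin.init, sum_add_distrib]
  rfl

lemma invCount_comp_finRotate_add (f : Fin (n + 1) → α) :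
    invCount (f ∘ finRotate (n + 1)) + #{j | f j < f 0}
      = invCount f + #{j | f 0 < (f ∘ finRotate (n + 1)) j} := by
  rw [invCount_eq_invCount_init_add (f ∘ finRotate (n + 1)), invCount_eq_invCount_tail_add f,
    init_comp_finRotate]
  simp only [Function.comp_apply, finRotate_last]
  ring

end

lemma inversions_eq_invCount {n : ℕ} (σ : Equiv.Perm (Fin n)) : inversions σ = invCount σ := rfl

lemma card_filter_perm_apply_lt {n : ℕ} (σ : Equiv.Perm (Fin n)) (a : Fin n) :
    #{j | σ j < a} = a := by
  rw [card_filter, Equiv.sum_comp σ (fun v => if v < a then 1 else 0), ← card_filter,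
    filter_gt_eq_Iio, Fin.card_Iio]

lemma card_filter_lt_perm_apply {n : ℕ} (σ : Equiv.Perm (Fin n)) (a : Fin n) :
    #{j | a < σ j} = n - 1 - a := by
  rw [card_filter, Equiv.sum_comp σ (fun v => if a < v then 1 else 0), ← card_filter,
    filter_lt_eq_Ioi, Fin.card_Ioi]

lemma inversions_mul_finRotate {n : ℕ} (σ : Equiv.Perm (Fin (n + 1))) :
    (inversions (σ * finRotate (n + 1)) : ℤ) - inversions σ = n - 2 * σ 0 := by
  have h := invCount_comp_finRotate_add ⇑σ
  rw [← Equiv.Perm.coe_mul, card_filter_perm_apply_lt, card_filter_lt_perm_apply] at h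
  rw [inversions_eq_invCount, inversions_eq_invCount]
  have h0 := (σ 0).is_le
  omega

lemma finRotate_pow_apply_zero {n i : ℕ} (hi : i < n + 1) :
    (finRotate (n + 1) ^ i) 0 = ⟨i, hi⟩ := by
  have h : (finRotate (n + 1))^[i] = finCycle ⟨i, hi⟩ :=
    (finCycle_eq_finRotate_iterate (k := ⟨i, hi⟩)).symm
  rw [← Equiv.Perm.iterate_eq_pow, h, finCycle_apply, zero_add]

theorem inv_rotate_pow {n : ℕ} (π : Equiv.Perm (Fin n)) (i : ℕ) (hi : i ≤ n) :
    (inversions (π * (finRotate n) ^ i) : ℤ) - inversions π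
      = i * (n + 1)
        - 2 * ∑ j ∈ Finset.univ.filter (fun j : Fin n => (j : ℕ) < i), ((π j : ℤ) + 1) := by
  induction i with
  | zero => simp
  | succ i ih =>
    obtain ⟨m, rfl⟩ : ∃ m, n = m + 1 := ⟨n - 1, by omega⟩
    have step := inversions_mul_finRotate (π * finRotate (m + 1) ^ i)
    rw [Equiv.Perm.mul_apply, finRotate_pow_apply_zero (by omega)] at step
    have filter_succ : ({j | (j : ℕ) < i + 1} : Finset (Fin (m + 1)))
        = insert (⟨i, by omega⟩ : Fin (m + 1)) ({j | (j : ℕ) < i} : Finset (Fin (m + 1))) := by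
      ext j
      simp only [mem_filter, mem_univ, true_and, mem_insert, Fin.ext_iff]
      omega
    rw [pow_succ, ← mul_assoc, filter_succ, sum_insert (by simp)]
    push_cast at ih step ⊢
    linarith [ih (by omega)]
end

section
/- For every permutation τ ∈ S_n and every 0 ≤ k ≤ n, inv(τ) ≤ C(n−k, 2) − k + Σ_{i=1}^k τ(i). -/
open Finset

/-!
An inversion `(i, j)` with `i < k` is sent injectively to `(i, τ j)` with `τ j < τ i`, so there are
at most `∑_{i<k} τ i` of them (values counted from `0`, whence the `+ 1` and `- k` in the
statement); an inversion with `k ≤ i` is a pair `k ≤ i < j`, and there are `C(n - k, 2)` of those.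
-/

lemma Fin.card_filter_le_val {n k : ℕ} : #{i : Fin n | k ≤ (i : ℕ)} = n - k := by
  simp only [← not_lt, filter_not, card_sdiff_of_subset (filter_subset _ _), card_univ,
    Fintype.card_fin, Fin.card_filter_val_lt]
  omega

lemma Fin.card_filter_le_fst_lt_snd {n : ℕ} (k : ℕ) :
    #{p : Fin n × Fin n | k ≤ (p.1 : ℕ) ∧ p.1 < p.2} = (n - k).choose 2 := by
  rw [← Fin.card_filter_le_val, ← card_product_filter_lt]
  congr 1
  ext ⟨i, j⟩
  simp only [mem_filter, mem_univ, mem_product, true_and, Fin.lt_def]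
  omega

lemma card_inversions_filter_fst_le_sum {n : ℕ} (τ : Equiv.Perm (Fin n)) (P : Fin n → Prop)
    [DecidablePred P] :
    #{p : Fin n × Fin n | (p.1 < p.2 ∧ τ p.2 < τ p.1) ∧ P p.1} ≤ ∑ i with P i, (τ i : ℕ) := by
  calc #{p : Fin n × Fin n | (p.1 < p.2 ∧ τ p.2 < τ p.1) ∧ P p.1}
      ≤ #((univ.filter P).sigma fun i => Iio (τ i)) := by
        refine card_le_card_of_injOn (fun p => ⟨p.1, τ p.2⟩) ?_ ?_
        · intro p hp
          simp only [coe_filter, mem_univ, true_and, Set.mem_ofPred_eq] at hp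
          simp [hp.2, hp.1.2]
        · intro p _ q _ h
          simp only [Sigma.mk.injEq] at h
          exact Prod.ext h.1 (τ.injective (eq_of_heq h.2))
    _ = ∑ i with P i, (τ i : ℕ) := by simp

theorem inversions_le_choose_add_sum {n : ℕ} (τ : Equiv.Perm (Fin n)) (k : ℕ) :
    inversions τ ≤
      (n - k).choose 2 + ∑ i ∈ univ.filter (fun i : Fin n => (i : ℕ) < k), (τ i : ℕ) := by
  rw [inversions, ← card_filter_add_card_filter_not (fun p : Fin n × Fin n => (p.1 : ℕ) < k),
    filter_filter, filter_filter, add_comm]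
  gcongr
  · rw [← Fin.card_filter_le_fst_lt_snd k]
    refine card_le_card fun p hp => ?_
    simp only [mem_filter, mem_univ, true_and, not_lt] at hp ⊢
    exact ⟨hp.2, hp.1.1⟩
  · exact card_inversions_filter_fst_le_sum τ fun i => (i : ℕ) < k

theorem inv_le_prefix_sum {n : ℕ} (τ : Equiv.Perm (Fin n)) (k : ℕ) (hk : k ≤ n) :
    (inversions τ : ℤ)
      ≤ ((n - k).choose 2 : ℤ) - k
        + ∑ i ∈ Finset.univ.filter (fun i : Fin n => (i : ℕ) < k), ((τ i : ℤ) + 1) := by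
  have hprefix : #{i : Fin n | (i : ℕ) < k} = k := by
    rw [Fin.card_filter_val_lt]; omega
  rw [sum_add_distrib, sum_const, hprefix, nsmul_one, sub_add_add_cancel]
  exact_mod_cast inversions_le_choose_add_sum τ k
end

section
/- Let n = 2m be even, and let σ = w₀·c_n^m ∈ S_n, i.e., σ = [m, m−1, …, 1, 2m, 2m−1, …, m+1] in one-line notation. Then σ is heavy tailed (Σ_{j=1}^k σ(j) ≤ k(n+1)/2 for all 1 ≤ k ≤ n) and inv(σ) = 2·C(m, 2). -/
open Finset

lemma rot_pow_val {n : ℕ} (hn : 0 < n) (t : ℕ) (j : Fin n) :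
    (((finRotate n) ^ t) j : ℕ) = ((j : ℕ) + t) % n := by
  obtain ⟨k, rfl⟩ := Nat.exists_eq_succ_of_ne_zero hn.ne'
  induction t generalizing j with
  | zero => simp [Nat.mod_eq_of_lt j.isLt]
  | succ t ih =>
    rw [pow_succ, Equiv.Perm.mul_apply, finRotate_succ_apply, ih, Fin.add_def]
    simp only [Fin.val_one']
    rw [Nat.mod_add_mod]
    have h : ((j : ℕ) + 1 % (k+1) + t) ≡ ((j : ℕ) + (t+1)) [MOD (k+1)] := by
      calc ((j : ℕ) + 1 % (k+1) + t) ≡ ((j:ℕ) + 1 + t) [MOD (k+1)] :=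
            ((Nat.ModEq.refl _).add (Nat.mod_modEq 1 _)).add (Nat.ModEq.refl t)
        _ = (j : ℕ) + (t+1) := by ring
    exact h

lemma sigma_val {m : ℕ} (hm : 0 < m) (j : Fin (2*m)) :
    (((Fin.revPerm : Equiv.Perm (Fin (2*m))) * (finRotate (2*m)) ^ m) j : ℕ) =
      if (j : ℕ) < m then m - 1 - j else 3*m - 1 - j := by
  rw [Equiv.Perm.mul_apply, Fin.revPerm_apply, Fin.val_rev,
    rot_pow_val (by omega) m j]
  have hj := j.isLt
  by_cases h : (j : ℕ) < m
  · rw [Nat.mod_eq_of_lt (by omega), if_pos h]; omega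
  · rw [Nat.mod_eq_sub_mod (by omega), Nat.mod_eq_of_lt (by omega), if_neg h]
    omega

lemma filter_sum {n : ℕ} (k : ℕ) (hk : k ≤ n) (f : ℕ → ℕ) :
    ∑ j ∈ univ.filter (fun j : Fin n => (j : ℕ) < k), f (j : ℕ)
      = ∑ i ∈ Finset.range k, f i := by
  rw [Finset.sum_filter, Fin.sum_univ_eq_sum_range (fun i => if i < k then f i else 0),
    ← Finset.sum_filter]
  congr 1
  ext i
  simp only [Finset.mem_filter, Finset.mem_range]
  omega

lemma key_sum {m : ℕ} (hm : 0 < m) (k : ℕ) (hk : k ≤ 2*m) :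
    2 * ∑ i ∈ Finset.range k, ((if i < m then m - 1 - i else 3*m - 1 - i) + 1)
      ≤ k * (2*m + 1) := by
  have hcast : ∀ i ∈ Finset.range k,
      (((if i < m then m - 1 - i else 3*m - 1 - i) + 1 : ℕ) : ℤ)
        = if i < m then (m : ℤ) - i else 3*(m:ℤ) - i := by
    intro i hi
    rw [Finset.mem_range] at hi
    split_ifs with h <;> push_cast <;> omega
  rw [← Nat.cast_le (α := ℤ), Nat.cast_mul, Nat.cast_sum, Finset.sum_congr rfl hcast]
  push_cast
  have gauss : ∀ t : ℕ, (∑ i ∈ Finset.range t, (i : ℤ)) * 2 = t * (t - 1) := by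
    intro t
    have := Finset.sum_range_id_mul_two t
    have h2 : ((∑ i ∈ Finset.range t, i) * 2 : ℕ) = (t * (t-1) : ℕ) := this
    zify at h2
    push_cast at h2
    rcases Nat.eq_zero_or_pos t with rfl | ht
    · simp
    · rw [Nat.cast_sub (by omega)] at h2; push_cast at h2; linarith
  by_cases hkm : k ≤ m
  · have : ∀ i ∈ Finset.range k, (if i < m then (m:ℤ) - i else 3*(m:ℤ) - i) = (m:ℤ) - i := by
      intro i hi; rw [Finset.mem_range] at hi; rw [if_pos (by omega)]
    rw [Finset.sum_congr rfl this, Finset.sum_sub_distrib, Finset.sum_const,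
      Finset.card_range]
    have := gauss k
    rw [nsmul_eq_mul]
    nlinarith [sq_nonneg ((k:ℤ) - 1)]
  · push_neg at hkm
    rw [Finset.range_eq_Ico, ← Finset.sum_Ico_consecutive _ (Nat.zero_le m) (le_of_lt hkm),
      ← Finset.range_eq_Ico, Finset.sum_Ico_eq_sum_range]
    have h1 : ∀ i ∈ Finset.range m, (if i < m then (m:ℤ) - i else 3*(m:ℤ) - i) = (m:ℤ) - i := by
      intro i hi; rw [Finset.mem_range] at hi; rw [if_pos hi]
    have h2 : ∀ i ∈ Finset.range (k - m),
        (if m + i < m then (m:ℤ) - ((m + i : ℕ) : ℤ) else 3*(m:ℤ) - ((m + i : ℕ) : ℤ))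
          = 2*(m:ℤ) - i := by
      intro i hi; rw [if_neg (by omega)]; push_cast; ring
    rw [Finset.sum_congr rfl h1, Finset.sum_congr rfl h2,
      Finset.sum_sub_distrib, Finset.sum_sub_distrib, Finset.sum_const, Finset.sum_const,
      Finset.card_range, Finset.card_range, nsmul_eq_mul, nsmul_eq_mul]
    have g1 := gauss m
    have g2 := gauss (k - m)
    have hkm' : ((k - m : ℕ) : ℤ) = (k : ℤ) - m := by
      rw [Nat.cast_sub (le_of_lt hkm)]
    rw [hkm'] at g2 ⊢
    nlinarith [sq_nonneg ((m:ℤ) - ((k:ℤ) - m)), sq_nonneg ((k:ℤ) - m - 1)]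

lemma card_filter_val {n : ℕ} (P : ℕ → Prop) [DecidablePred P] :
    (univ.filter fun a : Fin n => P (a : ℕ)).card = ((Finset.range n).filter P).card := by
  rw [Finset.card_filter, Finset.card_filter,
    Fin.sum_univ_eq_sum_range (fun i => if P i then 1 else 0)]

lemma fiber_step {n : ℕ} (σ : Equiv.Perm (Fin n)) :
    inversions σ = ∑ b : Fin n, (univ.filter (fun a : Fin n => a < b ∧ σ b < σ a)).card := by
  rw [inversions, Finset.card_eq_sum_card_fiberwise (f := Prod.snd) (t := univ)
    (fun _ _ => Finset.mem_univ _)]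
  refine Finset.sum_congr rfl fun b _ => ?_
  refine Finset.card_bij' (fun p _ => p.1) (fun a _ => (a, b)) ?_ ?_ ?_ ?_
  · intro p hp
    simp only [Finset.mem_filter, Finset.mem_univ, true_and] at hp ⊢
    obtain ⟨⟨h1, h2⟩, h3⟩ := hp
    rw [h3] at h1 h2
    exact ⟨h1, h2⟩
  · intro a ha
    simp only [Finset.mem_filter, Finset.mem_univ, true_and] at ha ⊢
    exact ⟨ha, trivial⟩
  · intro p hp
    simp only [Finset.mem_filter, Finset.mem_univ, true_and] at hp
    exact Prod.ext rfl hp.2.symm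
  · intro a ha
    rfl

lemma inv_count {m : ℕ} (hm : 0 < m) :
    inversions ((Fin.revPerm : Equiv.Perm (Fin (2*m))) * (finRotate (2*m)) ^ m)
      = 2 * m.choose 2 := by
  set σ := (Fin.revPerm : Equiv.Perm (Fin (2*m))) * (finRotate (2*m)) ^ m with hσ
  rw [fiber_step]
  have hb : ∀ b : Fin (2*m), (univ.filter (fun a : Fin (2*m) => a < b ∧ σ b < σ a)).card
      = if (b : ℕ) < m then (b : ℕ) else (b : ℕ) - m := by
    intro b
    have hbl := b.isLt
    by_cases hbm : (b : ℕ) < m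
    · rw [if_pos hbm]
      have hcongr : univ.filter (fun a : Fin (2*m) => a < b ∧ σ b < σ a)
          = univ.filter (fun a : Fin (2*m) => (a : ℕ) < (b : ℕ)) := by
        apply Finset.filter_congr
        intro a _
        rw [Fin.lt_def, Fin.lt_def, hσ, sigma_val hm, sigma_val hm]
        have hal := a.isLt
        constructor
        · rintro ⟨h1, _⟩; exact h1
        · intro h1
          refine ⟨h1, ?_⟩
          rw [if_pos hbm, if_pos (by omega)]
          omega
      rw [hcongr, card_filter_val (fun v => v < (b : ℕ))]
      have : (Finset.range (2*m)).filter (fun v => v < (b : ℕ)) = Finset.range (b : ℕ) := by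
        ext v; simp only [Finset.mem_filter, Finset.mem_range]; omega
      rw [this, Finset.card_range]
    · rw [if_neg hbm]
      have hcongr : univ.filter (fun a : Fin (2*m) => a < b ∧ σ b < σ a)
          = univ.filter (fun a : Fin (2*m) => m ≤ (a : ℕ) ∧ (a : ℕ) < (b : ℕ)) := by
        apply Finset.filter_congr
        intro a _
        rw [Fin.lt_def, Fin.lt_def, hσ, sigma_val hm, sigma_val hm]
        have hal := a.isLt
        rw [if_neg hbm]
        constructor
        · rintro ⟨h1, h2⟩
          by_cases ham : (a : ℕ) < m
          · rw [if_pos ham] at h2; omega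
          · exact ⟨by omega, h1⟩
        · rintro ⟨h1, h2⟩
          refine ⟨h2, ?_⟩
          rw [if_neg (by omega)]
          omega
      rw [hcongr, card_filter_val (fun v => m ≤ v ∧ v < (b : ℕ))]
      have : (Finset.range (2*m)).filter (fun v => m ≤ v ∧ v < (b : ℕ))
          = Finset.Ico m (b : ℕ) := by
        ext v; simp only [Finset.mem_filter, Finset.mem_range, Finset.mem_Ico]; omega
      rw [this, Nat.card_Ico]
  rw [Finset.sum_congr rfl (fun b _ => hb b),
    Fin.sum_univ_eq_sum_range (fun v => if v < m then v else v - m),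
    Finset.range_eq_Ico, ← Finset.sum_Ico_consecutive _ (Nat.zero_le m) (by omega : m ≤ 2*m),
    ← Finset.range_eq_Ico, Finset.sum_Ico_eq_sum_range]
  have h1 : ∀ v ∈ Finset.range m, (if v < m then v else v - m) = v := by
    intro v hv; rw [Finset.mem_range] at hv; rw [if_pos hv]
  have h2 : ∀ i ∈ Finset.range (2*m - m), (if m + i < m then m + i else m + i - m) = i := by
    intro i _; rw [if_neg (by omega)]; omega
  rw [Finset.sum_congr rfl h1, Finset.sum_congr rfl h2]
  have : 2*m - m = m := by omega
  rw [this, Nat.choose_two_right]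
  have hg := Finset.sum_range_id_mul_two m
  omega

theorem shifted_w0_heavy_tailed {m n : ℕ} (hn : n = 2 * m) :
    (∀ k, 1 ≤ k → k ≤ n →
      2 * ∑ j ∈ Finset.univ.filter (fun j : Fin n => (j : ℕ) < k),
          ((((Fin.revPerm : Equiv.Perm (Fin n)) * (finRotate n) ^ m) j : ℕ) + 1)
        ≤ k * (n + 1)) ∧
    inversions ((Fin.revPerm : Equiv.Perm (Fin n)) * (finRotate n) ^ m)
      = 2 * m.choose 2 := by
  subst hn
  rcases Nat.eq_zero_or_pos m with rfl | hm
  · constructor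
    · intro k hk1 hk2; omega
    · simp [inversions]
  · constructor
    · intro k hk1 hk2
      rw [Finset.sum_congr rfl (fun j (_ : j ∈ Finset.univ.filter
          (fun j : Fin (2*m) => (j : ℕ) < k)) => by rw [sigma_val hm]),
        filter_sum k hk2 (fun v => (if v < m then m - 1 - v else 3*m - 1 - v) + 1)]
      exact key_sum hm k hk2
    · exact inv_count hm
end
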